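/- arXiv:2410.23594 — 3 statements merged into one kernel-verified Lean document; each statement's English description precedes it below -/
import Mathlib

section
/- If the softmax of (z_1,…,z_N) has maximum entry at most τ < 1, then the gap between the largest and second-largest inputs satisfies z_max - z_next ≤ log(τ(N-1)/(1-τ)). -/
open Finset Real

theorem one_sub_mul_exp_le_mul_sum_erase {ι : Type*} [Fintype ι] [DecidableEq ι] (z : ι → ℝ)
    {τ : ℝ} (i : ι) (h : exp (z i) / ∑ k, exp (z k) ≤ τ) :
    (1 - τ) * exp (z i) ≤ τ * ∑ k ∈ univ.erase i, exp (z k) := by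
  have hsum : 0 < ∑ k, exp (z k) := sum_pos (fun k _ ↦ exp_pos (z k)) ⟨i, mem_univ i⟩
  rw [div_le_iff₀ hsum, ← add_sum_erase _ _ (mem_univ i)] at h
  linarith

theorem sum_exp_le_card_mul_exp_sup' {ι : Type*} (s : Finset ι) (hs : s.Nonempty) (z : ι → ℝ) :
    ∑ k ∈ s, exp (z k) ≤ s.card * exp (s.sup' hs z) := by
  rw [← nsmul_eq_mul]
  exact sum_le_card_nsmul s _ _ fun k hk ↦ exp_le_exp.mpr (le_sup' z hk)

/-- If every entry of the softmax of `(z 1, …, z N)` is at most `τ < 1`, then the gap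
between the largest input and the second-largest input (with multiplicity) is at most
`log (τ (N-1) / (1 - τ))`. -/
theorem softmax_max_le_imp_gap_le {N : ℕ} (hN : 2 ≤ N) (z : Fin N → ℝ)
    (τ : ℝ) (hτ : τ ∈ Set.Ioo (0 : ℝ) 1)
    (hsoft : ∀ i, Real.exp (z i) / ∑ k, Real.exp (z k) ≤ τ)
    (i : Fin N) :
    z i - (Finset.univ.erase i).sup' (by
        apply Finset.card_pos.mp
        rw [Finset.card_erase_of_mem (Finset.mem_univ i)]
        simp only [Finset.card_univ, Fintype.card_fin]
        omega) z ≤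
      Real.log (τ * (N - 1) / (1 - τ)) := by
  obtain ⟨hτ0, hτ1⟩ := hτ
  have hN1 : (0 : ℝ) < N - 1 := by
    have : (2 : ℝ) ≤ N := by exact_mod_cast hN
    linarith
  have hcard : ((univ.erase i).card : ℝ) = N - 1 := by
    rw [card_erase_of_mem (mem_univ i), card_univ, Fintype.card_fin, Nat.cast_pred (by omega)]
  have : Nontrivial (Fin N) := Fin.nontrivial_iff_two_le.2 hN
  have hne : (univ.erase i).Nonempty := univ_nontrivial.erase_nonempty
  have key : (1 - τ) * exp (z i) ≤ τ * ((N - 1) * exp ((univ.erase i).sup' hne z)) :=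
    (one_sub_mul_exp_le_mul_sum_erase z i (hsoft i)).trans
      (mul_le_mul_of_nonneg_left (hcard ▸ sum_exp_le_card_mul_exp_sup' _ hne z) hτ0.le)
  rw [le_log_iff_exp_le (by positivity), exp_sub,
    div_le_div_iff₀ (exp_pos _) (by linarith)]
  linarith
end

section
/- Softmax weight concentration bound: if x ∼ (1/N)Σ_i N(t y^i, (1-t)² I_d) with pairwise distances ||y^i - y^j|| ≥ M, then the probability that the maximum softmax weight max(w_t(x)) is at most τ < 1 is bounded by (1/√(2π))·((1-t)/t)·(1/M)·log(τ(N-1)/(1-τ))·N(N-1). -/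
/-!
If every softmax weight is at most `τ < 1`, let `k` carry the largest weight and `l` the largest
of the others. Then `w_k ≤ τ (w_k + (N - 1) w_l)`, so the energy gap
`E_l - E_k = (‖x - t yˡ‖² - ‖x - t yᵏ‖²) / (2 (1 - t)²)` lies in `[0, L]` with
`L = log (τ (N - 1) / (1 - τ))`. The gap is affine in `x` with slope `t (yᵏ - yˡ) / (1 - t)²`,
so `x` lies in a slab orthogonal to `yᵏ - yˡ` of width `(1 - t)² L / (t ‖yᵏ - yˡ‖)`.
The projection of `N(m, (1 - t)² I)` onto that direction is a one-dimensional Gaussian of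
standard deviation `(1 - t) ‖yᵏ - yˡ‖`, whose density is at most
`1 / (√(2π) (1 - t) ‖yᵏ - yˡ‖)`, so every mixture component gives the slab mass at most
`(1 - t) L / (√(2π) t M)`. A union bound over the `N (N - 1)` ordered pairs finishes the proof.
-/

open MeasureTheory ProbabilityTheory Real
open scoped ENNReal

/-- The standard Gaussian measure `N(0, I_d)` on `ℝ^d`. -/
noncomputable def stdGaussian (d : ℕ) : Measure (EuclideanSpace ℝ (Fin d)) :=
  (Measure.pi fun _ : Fin d => gaussianReal 0 1).map
    (MeasurableEquiv.toLp 2 (Fin d → ℝ))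

/-- The Gaussian `N(m, s² I_d)` on `ℝ^d`, as the law of `m + s • z` for `z ∼ N(0, I_d)`. -/
noncomputable def isoGaussian {d : ℕ} (m : EuclideanSpace ℝ (Fin d)) (s : ℝ) :
    Measure (EuclideanSpace ℝ (Fin d)) :=
  (stdGaussian d).map (fun z => m + s • z)

open scoped NNReal RealInnerProductSpace

lemma gaussianPDFReal_le (μ : ℝ) (v : ℝ≥0) (x : ℝ) : gaussianPDFReal μ v x ≤ (√(2 * π * v))⁻¹ := by
  rw [gaussianPDFReal]
  refine mul_le_of_le_one_right (by positivity) (exp_le_one_iff.2 ?_)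
  rw [neg_div, neg_nonpos]
  positivity

lemma gaussianReal_Icc_le (μ : ℝ) {v : ℝ≥0} (hv : v ≠ 0) (a b : ℝ) :
    gaussianReal μ v (Set.Icc a b) ≤ ENNReal.ofReal ((b - a) / √(2 * π * v)) := calc
  gaussianReal μ v (Set.Icc a b) = ∫⁻ x in Set.Icc a b, gaussianPDF μ v x :=
    gaussianReal_apply μ hv _
  _ ≤ ∫⁻ _ in Set.Icc a b, ENNReal.ofReal (√(2 * π * v))⁻¹ :=
    setLIntegral_mono measurable_const fun x _ =>
      ENNReal.ofReal_le_ofReal (gaussianPDFReal_le μ v x)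
  _ = ENNReal.ofReal ((b - a) / √(2 * π * v)) := by
    rw [setLIntegral_const, Real.volume_Icc, ← ENNReal.ofReal_mul (by positivity), div_eq_inv_mul]

lemma stdGaussian_map_innerSL {E : Type*} [NormedAddCommGroup E] [InnerProductSpace ℝ E]
    [FiniteDimensional ℝ E] [MeasurableSpace E] [BorelSpace E] (w : E) :
    (ProbabilityTheory.stdGaussian E).map (innerSL ℝ w) = gaussianReal 0 (‖w‖₊ ^ 2) := by
  rw [IsGaussian.map_eq_gaussianReal, integral_strongDual_stdGaussian, variance_dual_stdGaussian,
    innerSL_apply_norm]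
  congr
  ext
  simp

lemma isoGaussian_eq_map_stdGaussian {d : ℕ} (m : EuclideanSpace ℝ (Fin d)) (s : ℝ) :
    isoGaussian m s = (ProbabilityTheory.stdGaussian (EuclideanSpace ℝ (Fin d))).map
      (fun z => m + s • z) := by
  rw [isoGaussian, _root_.stdGaussian, ← map_pi_eq_stdGaussian]
  rfl

lemma isoGaussian_map_inner {d : ℕ} (m w : EuclideanSpace ℝ (Fin d)) (s : ℝ) :
    (isoGaussian m s).map (fun x => ⟪w, x⟫) = gaussianReal ⟪w, m⟫ (‖s • w‖₊ ^ 2) := by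
  have hcomp : (fun x => ⟪w, x⟫) ∘ (fun z => m + s • z) =
      (⟪w, m⟫ + ·) ∘ (s * ·) ∘ innerSL ℝ w := by
    ext z
    simp [inner_add_right, real_inner_smul_right]
  rw [isoGaussian_eq_map_stdGaussian, Measure.map_map (by fun_prop) (by fun_prop), hcomp,
    ← Measure.map_map (by fun_prop) (by fun_prop), ← Measure.map_map (by fun_prop) (by fun_prop),
    stdGaussian_map_innerSL, gaussianReal_map_const_mul, gaussianReal_map_const_add]
  congr 1
  · ring
  · ext
    simp [norm_smul, mul_pow]

lemma isoGaussian_setOf_inner_mem_Icc_le {d : ℕ} (m : EuclideanSpace ℝ (Fin d)) {s : ℝ} (hs : 0 < s)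
    {w : EuclideanSpace ℝ (Fin d)} {M : ℝ} (hM : 0 < M) (hw : M ≤ ‖w‖) (a b : ℝ) :
    isoGaussian m s {x | ⟪w, x⟫ ∈ Set.Icc a b} ≤ ENNReal.ofReal ((b - a) / (√(2 * π) * s * M)) := by
  have hw0 : 0 < ‖w‖ := hM.trans_le hw
  have hv : ‖s • w‖₊ ^ 2 ≠ 0 := by
    simpa [hs.ne'] using hw0.ne'
  calc isoGaussian m s {x | ⟪w, x⟫ ∈ Set.Icc a b}
      = gaussianReal ⟪w, m⟫ (‖s • w‖₊ ^ 2) (Set.Icc a b) := by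
        rw [← isoGaussian_map_inner, Measure.map_apply (by fun_prop) measurableSet_Icc]
        rfl
    _ ≤ ENNReal.ofReal ((b - a) / (√(2 * π) * s * ‖w‖)) := by
        have hsd : √(2 * π * (‖s • w‖₊ ^ 2 : ℝ≥0)) = √(2 * π) * s * ‖w‖ := by
          rw [NNReal.coe_pow, coe_nnnorm, norm_smul, norm_of_nonneg hs.le,
            sqrt_mul (by positivity), sqrt_sq (by positivity), mul_assoc]
        simpa only [hsd] using gaussianReal_Icc_le _ hv a b
    _ ≤ _ := by
        rcases le_total a b with hab | hab
        · gcongr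
        · rw [ENNReal.ofReal_of_nonpos
            (div_nonpos_of_nonpos_of_nonneg (by linarith) (by positivity))]
          exact zero_le

lemma sum_inv_natCast_smul_apply_le {α : Type*} [MeasurableSpace α] {N : ℕ}
    (μ : Fin N → Measure α) {s : Set α} {c : ℝ≥0∞} (h : ∀ i, μ i s ≤ c) :
    (∑ i : Fin N, (N : ℝ≥0∞)⁻¹ • μ i) s ≤ c := by
  rcases N.eq_zero_or_pos with rfl | hN
  · simp
  calc (∑ i : Fin N, (N : ℝ≥0∞)⁻¹ • μ i) s = ∑ i : Fin N, (N : ℝ≥0∞)⁻¹ * μ i s := by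
        simp [Measure.finsetSum_apply]
    _ ≤ ∑ _i : Fin N, (N : ℝ≥0∞)⁻¹ * c := by gcongr with i; exact h i
    _ = c := by
        rw [Finset.sum_const, Finset.card_univ, Fintype.card_fin, nsmul_eq_mul, ← mul_assoc,
          ENNReal.mul_inv_cancel (by exact_mod_cast hN.ne') (ENNReal.natCast_ne_top N), one_mul]

lemma exists_ne_sub_le_log_of_softmax_le {ι : Type*} [Fintype ι] [Nonempty ι] (E : ι → ℝ)
    {τ : ℝ} (hτ : τ < 1) (h : ∀ i, exp (-E i) / ∑ j, exp (-E j) ≤ τ) :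
    ∃ k l, k ≠ l ∧ E k ≤ E l ∧ E l - E k ≤ log (τ * (Fintype.card ι - 1) / (1 - τ)) := by
  classical
  set f : ι → ℝ := fun i => exp (-E i)
  have hsum : 0 < ∑ j, f j := Finset.sum_pos (fun j _ => exp_pos _) Finset.univ_nonempty
  obtain ⟨k, -, hk⟩ := Finset.exists_max_image Finset.univ f Finset.univ_nonempty
  have hfk : f k ≤ τ * ∑ j, f j := (div_le_iff₀ hsum).1 (h k)
  have hτ0 : 0 ≤ τ := (div_pos (exp_pos _) hsum).le.trans (h k)
  have hrest : (Finset.univ.erase k).Nonempty := by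
    rw [Finset.nonempty_iff_ne_empty]
    intro hempty
    rw [← Finset.add_sum_erase _ _ (Finset.mem_univ k), hempty, Finset.sum_empty, add_zero] at hfk
    nlinarith [exp_pos (-E k)]
  obtain ⟨l, hl, hlk⟩ := Finset.exists_max_image _ f hrest
  have hsum_le : ∑ j, f j ≤ f k + (Fintype.card ι - 1) * f l := by
    rw [← Finset.add_sum_erase _ _ (Finset.mem_univ k)]
    gcongr
    calc ∑ j ∈ Finset.univ.erase k, f j ≤ (Finset.univ.erase k).card • f l :=
          Finset.sum_le_card_nsmul _ _ _ hlk
      _ = (Fintype.card ι - 1) * f l := by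
          rw [Finset.card_erase_of_mem (Finset.mem_univ k), nsmul_eq_mul, Finset.card_univ,
            Nat.cast_pred Fintype.card_pos]
  have hratio : f k / f l ≤ τ * (Fintype.card ι - 1) / (1 - τ) := by
    rw [div_le_div_iff₀ (exp_pos _) (by linarith)]
    nlinarith
  refine ⟨k, l, (Finset.ne_of_mem_erase hl).symm, ?_, ?_⟩
  · simpa [f] using hk l (Finset.mem_univ l)
  · rw [le_log_iff_exp_le ((div_pos (exp_pos _) (exp_pos _)).trans_le hratio)]
    rwa [show E l - E k = -E k - -E l by ring, exp_sub]

lemma half_norm_sq_smul_sub_smul_sub {F : Type*} [NormedAddCommGroup F] [InnerProductSpace ℝ F]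
    (c s : ℝ) (x u v : F) :
    ‖c • (x - s • v)‖ ^ 2 / 2 - ‖c • (x - s • u)‖ ^ 2 / 2 =
      c ^ 2 * s * (⟪u - v, x⟫ - s * (‖u‖ ^ 2 - ‖v‖ ^ 2) / 2) := by
  simp only [norm_smul, mul_pow, norm_sub_sq_real, inner_smul_right, inner_sub_right,
    norm_eq_abs, sq_abs, real_inner_comm x]
  ring

section GapSlab

variable {ι F : Type*} [NormedAddCommGroup F] [InnerProductSpace ℝ F]

/-- For `0 < t`, `x ∈ gapSlab y t L (k, l)` iff
`0 ≤ ‖x - t • y l‖² - ‖x - t • y k‖² ≤ 2 (1 - t)² L`. -/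
def gapSlab (y : ι → F) (t L : ℝ) (p : ι × ι) : Set F :=
  {x | ⟪y p.1 - y p.2, x⟫ ∈ Set.Icc (t * (‖y p.1‖ ^ 2 - ‖y p.2‖ ^ 2) / 2)
    (t * (‖y p.1‖ ^ 2 - ‖y p.2‖ ^ 2) / 2 + (1 - t) ^ 2 / t * L)}

lemma setOf_forall_softmax_le_subset_biUnion_gapSlab [Fintype ι] [Nonempty ι] (y : ι → F)
    {t τ : ℝ} (ht : t ∈ Set.Ioo (0 : ℝ) 1) (hτ : τ < 1) :
    {x | ∀ i, exp (-‖(1 - t)⁻¹ • (x - t • y i)‖ ^ 2 / 2) /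
        ∑ j, exp (-‖(1 - t)⁻¹ • (x - t • y j)‖ ^ 2 / 2) ≤ τ} ⊆
      ⋃ p ∈ Finset.univ.offDiag, gapSlab y t (log (τ * (Fintype.card ι - 1) / (1 - τ))) p := by
  intro x hx
  obtain ⟨k, l, hkl, hkl_le, hgap⟩ := exists_ne_sub_le_log_of_softmax_le
    (fun i => ‖(1 - t)⁻¹ • (x - t • y i)‖ ^ 2 / 2) hτ fun i => by simpa only [neg_div] using hx i
  have hP : 0 < (1 - t)⁻¹ ^ 2 * t := by
    have := sub_pos.2 ht.2
    have := ht.1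
    positivity
  rw [← sub_nonneg, half_norm_sq_smul_sub_smul_sub] at hkl_le
  rw [half_norm_sq_smul_sub_smul_sub] at hgap
  refine Set.mem_biUnion (x := (k, l)) (by simpa using hkl) ⟨?_, ?_⟩
  · linarith [nonneg_of_mul_nonneg_right hkl_le hP]
  · rw [show (1 - t) ^ 2 / t = 1 / ((1 - t)⁻¹ ^ 2 * t) by field_simp, ← sub_le_iff_le_add',
      one_div_mul_eq_div, le_div_iff₀ hP]
    linarith

end GapSlab

lemma isoGaussian_gapSlab_le {d : ℕ} {ι : Type*} (m : EuclideanSpace ℝ (Fin d))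
    (y : ι → EuclideanSpace ℝ (Fin d)) {M : ℝ} (hM : 0 < M) {t : ℝ} (ht : t ∈ Set.Ioo (0 : ℝ) 1)
    (L : ℝ) {p : ι × ι} (hp : M ≤ ‖y p.1 - y p.2‖) :
    isoGaussian m (1 - t) (gapSlab y t L p) ≤
      ENNReal.ofReal ((√(2 * π))⁻¹ * ((1 - t) / t) * M⁻¹ * L) := by
  refine (isoGaussian_setOf_inner_mem_Icc_le _ (sub_pos.2 ht.2) hM hp _ _).trans_eq ?_
  have := ht.1.ne'
  have := (sub_pos.2 ht.2).ne'
  congr 1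
  field_simp
  ring

/-- Softmax weight concentration bound: if `x ∼ (1/N) ∑ᵢ N(t yⁱ, (1-t)² I_d)` with pairwise
distances `‖yⁱ - yʲ‖ ≥ M`, then the probability that all softmax weights
`w_t(x)_i = exp(-½‖(x - t yⁱ)/(1-t)‖²) / ∑ⱼ exp(-½‖(x - t yʲ)/(1-t)‖²)` are at most `τ < 1`
is bounded by `(1/√(2π))·((1-t)/t)·(1/M)·log(τ(N-1)/(1-τ))·N(N-1)`. -/
theorem softmax_concentration_bound {d N : ℕ} (y : Fin N → EuclideanSpace ℝ (Fin d))
    (M : ℝ) (hM : 0 < M) (hsep : ∀ i j, i ≠ j → M ≤ ‖y i - y j‖)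
    (t τ : ℝ) (ht : t ∈ Set.Ioo (0 : ℝ) 1) (hτ : τ ∈ Set.Ioo (0 : ℝ) 1) :
    (∑ i : Fin N, (N : ℝ≥0∞)⁻¹ • isoGaussian (t • y i) (1 - t))
      {x | ∀ i : Fin N,
        Real.exp (-‖(1 - t)⁻¹ • (x - t • y i)‖ ^ 2 / 2) /
          ∑ j, Real.exp (-‖(1 - t)⁻¹ • (x - t • y j)‖ ^ 2 / 2) ≤ τ} ≤
    ENNReal.ofReal
      ((Real.sqrt (2 * π))⁻¹ * ((1 - t) / t) * M⁻¹ * Real.log (τ * (N - 1) / (1 - τ))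
        * (N * (N - 1))) := by
  refine sum_inv_natCast_smul_apply_le _ fun i => ?_
  have : Nonempty (Fin N) := ⟨i⟩
  calc _ ≤ _ := measure_mono (setOf_forall_softmax_le_subset_biUnion_gapSlab y ht hτ.2)
    _ ≤ _ := measure_biUnion_finset_le _ _
    _ ≤ _ := Finset.sum_le_sum fun p hp =>
      isoGaussian_gapSlab_le _ y hM ht _ (hsep _ _ (Finset.mem_offDiag.1 hp).2.2)
    _ = _ := by
      rw [Finset.sum_const, ← ENNReal.ofReal_nsmul, Finset.offDiag_card, Finset.card_univ,
        Fintype.card_fin, nsmul_eq_mul]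
      congr 1
      push_cast [Nat.cast_sub (Nat.le_mul_self N)]
      ring
end

section
/- For bounded closed convex sets S, C₁, C₂ ⊆ ℝ^d, the set T = {t ∈ [0,1] : dist((1-t)S + tC₁, (1-t)S + tC₂) = 0} is a closed interval containing 0; in particular if C₁ and C₂ are disjoint then T is a closed interval not containing 1, so there exists t* < 1 with (1-t)S + tC₁ and (1-t)S + tC₂ disjoint for all t ∈ (t*, 1]. -/
/-!
For compact sets, distance zero means that the sets meet, so `T` is the set of times at which
`(1 - t) • S + t • C₁` and `(1 - t) • S + t • C₂` meet. Convexity of `S` and `Cᵢ` gives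
`λ • ((1 - u) • S + u • Cᵢ) + (1 - λ) • ((1 - v) • S + v • Cᵢ) = (1 - w) • S + w • Cᵢ` with
`w = λ u + (1 - λ) v`, so convex combinations of meeting points witness a meeting at `w`: `T` is
convex. It is compact as the projection of the intersection of the two compact graphs
`{(t, x) | x ∈ (1 - t) • S + t • Cᵢ}`. Hence `T = [inf T, sup T]`, and `sup T < 1` because at
`t = 1` the two sets are the disjoint `C₁` and `C₂`.
-/

open scoped Pointwise

/-- The distance between two sets: `dist(A, B) = inf {‖a - b‖ : a ∈ A, b ∈ B}`. -/
noncomputable def setDist {d : ℕ} (A B : Set (EuclideanSpace ℝ (Fin d))) : ℝ :=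
  sInf (Set.image2 dist A B)

open Set

theorem sInf_image2_dist_eq_zero_iff {X : Type*} [MetricSpace X] {A B : Set X}
    (hA : IsCompact A) (hB : IsCompact B) (hA₀ : A.Nonempty) (hB₀ : B.Nonempty) :
    sInf (image2 dist A B) = 0 ↔ (A ∩ B).Nonempty := by
  constructor
  · intro h
    have hcompact : IsCompact (image2 dist A B) := by
      rw [← image_prod]
      exact (hA.prod hB).image continuous_dist
    obtain ⟨a, ha, b, hb, hab⟩ := h ▸ hcompact.sInf_mem (hA₀.image2 hB₀)
    exact ⟨a, ha, dist_eq_zero.1 hab ▸ hb⟩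
  · rintro ⟨x, hxA, hxB⟩
    have hnonneg : ∀ r ∈ image2 dist A B, 0 ≤ r := by
      rintro _ ⟨a, -, b, -, rfl⟩
      exact dist_nonneg
    exact le_antisymm (csInf_le ⟨0, hnonneg⟩ ⟨x, hxA, x, hxB, dist_self x⟩)
      (Real.sInf_nonneg hnonneg)

section MinkowskiPath

variable {E : Type*} [AddCommGroup E] [Module ℝ E]

def minkowskiPath (S C : Set E) (t : ℝ) : Set E := (1 - t) • S + t • C

theorem minkowskiPath_zero {S C : Set E} (hC : C.Nonempty) : minkowskiPath S C 0 = S := by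
  rw [minkowskiPath, zero_smul_set hC, sub_zero, one_smul, add_zero]

theorem minkowskiPath_one {S C : Set E} (hS : S.Nonempty) : minkowskiPath S C 1 = C := by
  rw [minkowskiPath, sub_self, zero_smul_set hS, one_smul, zero_add]

theorem Convex.combo_minkowskiPath {S C : Set E}
    (hS : Convex ℝ S) (hC : Convex ℝ C) {u v a b : ℝ} (hu : u ∈ Icc (0 : ℝ) 1)
    (hv : v ∈ Icc (0 : ℝ) 1) (ha : 0 ≤ a) (hb : 0 ≤ b) (hab : a + b = 1) :
    a • minkowskiPath S C u + b • minkowskiPath S C v = minkowskiPath S C (a * u + b * v) := by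
  have hsub : 1 - (a * u + b * v) = a * (1 - u) + b * (1 - v) := by
    linear_combination -hab
  rw [minkowskiPath, minkowskiPath, minkowskiPath, smul_add, smul_add, smul_smul, smul_smul,
    smul_smul, smul_smul, hsub,
    hS.add_smul (mul_nonneg ha (sub_nonneg.2 hu.2)) (mul_nonneg hb (sub_nonneg.2 hv.2)),
    hC.add_smul (mul_nonneg ha hu.1) (mul_nonneg hb hv.1)]
  exact add_add_add_comm _ _ _ _

def meetingTimes (S C₁ C₂ : Set E) : Set ℝ :=
  {t ∈ Icc 0 1 | (minkowskiPath S C₁ t ∩ minkowskiPath S C₂ t).Nonempty}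

theorem zero_mem_meetingTimes {S C₁ C₂ : Set E} (hS : S.Nonempty) (hC₁ : C₁.Nonempty)
    (hC₂ : C₂.Nonempty) : 0 ∈ meetingTimes S C₁ C₂ := by
  refine ⟨left_mem_Icc.2 zero_le_one, ?_⟩
  rw [minkowskiPath_zero hC₁, minkowskiPath_zero hC₂, inter_self]
  exact hS

theorem one_notMem_meetingTimes {S C₁ C₂ : Set E} (hS : S.Nonempty) (hdisj : Disjoint C₁ C₂) :
    1 ∉ meetingTimes S C₁ C₂ := by
  rintro ⟨-, hmeet⟩
  rw [minkowskiPath_one hS, minkowskiPath_one hS] at hmeet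
  exact hmeet.not_disjoint hdisj

theorem convex_meetingTimes {S C₁ C₂ : Set E} (hS : Convex ℝ S) (hC₁ : Convex ℝ C₁)
    (hC₂ : Convex ℝ C₂) : Convex ℝ (meetingTimes S C₁ C₂) := by
  rintro u ⟨hu, x, hx₁, hx₂⟩ v ⟨hv, y, hy₁, hy₂⟩ a b ha hb hab
  refine ⟨convex_Icc 0 1 hu hv ha hb hab, a • x + b • y, ?_, ?_⟩
  · rw [smul_eq_mul, smul_eq_mul, ← hS.combo_minkowskiPath hC₁ hu hv ha hb hab]
    exact add_mem_add (smul_mem_smul_set hx₁) (smul_mem_smul_set hy₁)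
  · rw [smul_eq_mul, smul_eq_mul, ← hS.combo_minkowskiPath hC₂ hu hv ha hb hab]
    exact add_mem_add (smul_mem_smul_set hx₂) (smul_mem_smul_set hy₂)

variable [TopologicalSpace E] [ContinuousAdd E] [ContinuousSMul ℝ E]

theorem isCompact_graph_minkowskiPath {S C : Set E} (hS : IsCompact S) (hC : IsCompact C) :
    IsCompact {p : ℝ × E | p.1 ∈ Icc 0 1 ∧ p.2 ∈ minkowskiPath S C p.1} := by
  have hgraph : {p : ℝ × E | p.1 ∈ Icc 0 1 ∧ p.2 ∈ minkowskiPath S C p.1} =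
      (fun q : ℝ × E × E => (q.1, (1 - q.1) • q.2.1 + q.1 • q.2.2)) '' (Icc 0 1 ×ˢ S ×ˢ C) := by
    ext ⟨t, x⟩
    simp only [minkowskiPath, mem_ofPred_eq, mem_add, mem_smul_set, mem_image, mem_prod,
      Prod.exists, Prod.mk.injEq]
    aesop
  rw [hgraph]
  exact (isCompact_Icc.prod (hS.prod hC)).image (by fun_prop)

theorem isCompact_meetingTimes [T2Space E] {S C₁ C₂ : Set E} (hS : IsCompact S)
    (hC₁ : IsCompact C₁) (hC₂ : IsCompact C₂) : IsCompact (meetingTimes S C₁ C₂) := by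
  have hproj : meetingTimes S C₁ C₂ = Prod.fst ''
      ({p : ℝ × E | p.1 ∈ Icc 0 1 ∧ p.2 ∈ minkowskiPath S C₁ p.1} ∩
        {p : ℝ × E | p.1 ∈ Icc 0 1 ∧ p.2 ∈ minkowskiPath S C₂ p.1}) := by
    ext t
    simp only [meetingTimes, mem_image, mem_inter_iff, mem_ofPred_eq, Prod.exists,
      exists_and_right, exists_eq_right, Set.Nonempty]
    aesop
  rw [hproj]
  exact ((isCompact_graph_minkowskiPath hS hC₁).inter_right
    (isCompact_graph_minkowskiPath hS hC₂).isClosed).image continuous_fst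

end MinkowskiPath

/-- For nonempty compact convex `S, C₁, C₂ ⊆ ℝ^d` with `C₁` and `C₂` disjoint, the set
`T = {t ∈ [0,1] : dist((1-t)S + tC₁, (1-t)S + tC₂) = 0}` is a closed interval containing `0`
and not containing `1`; consequently there is `t* < 1` such that `(1-t)S + tC₁` and
`(1-t)S + tC₂` are disjoint for all `t ∈ (t*, 1]`. -/
theorem separation_time_exists {d : ℕ} (S C₁ C₂ : Set (EuclideanSpace ℝ (Fin d)))
    (hS : S.Nonempty) (hSc : IsCompact S) (hSconv : Convex ℝ S)
    (hC₁ : C₁.Nonempty) (hC₁c : IsCompact C₁) (hC₁conv : Convex ℝ C₁)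
    (hC₂ : C₂.Nonempty) (hC₂c : IsCompact C₂) (hC₂conv : Convex ℝ C₂)
    (hdisj : Disjoint C₁ C₂) :
    (0 : ℝ) ∈ {t : ℝ | t ∈ Set.Icc (0 : ℝ) 1 ∧
        setDist ((1 - t) • S + t • C₁) ((1 - t) • S + t • C₂) = 0} ∧
    (∃ a b : ℝ, {t : ℝ | t ∈ Set.Icc (0 : ℝ) 1 ∧
        setDist ((1 - t) • S + t • C₁) ((1 - t) • S + t • C₂) = 0} = Set.Icc a b) ∧
    (1 : ℝ) ∉ {t : ℝ | t ∈ Set.Icc (0 : ℝ) 1 ∧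
        setDist ((1 - t) • S + t • C₁) ((1 - t) • S + t • C₂) = 0} ∧
    ∃ tstar : ℝ, tstar < 1 ∧ ∀ t ∈ Set.Ioc tstar 1,
        Disjoint ((1 - t) • S + t • C₁) ((1 - t) • S + t • C₂) := by
  have hT : {t : ℝ | t ∈ Icc (0 : ℝ) 1 ∧
      setDist ((1 - t) • S + t • C₁) ((1 - t) • S + t • C₂) = 0} = meetingTimes S C₁ C₂ := by
    ext t
    exact and_congr_right fun _ => sInf_image2_dist_eq_zero_iff
      ((hSc.smul _).add (hC₁c.smul _)) ((hSc.smul _).add (hC₂c.smul _))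
      (hS.smul_set.add hC₁.smul_set) (hS.smul_set.add hC₂.smul_set)
  set T := meetingTimes S C₁ C₂
  have h0 : 0 ∈ T := zero_mem_meetingTimes hS hC₁ hC₂
  have h1 : 1 ∉ T := one_notMem_meetingTimes hS hdisj
  have hTc : IsCompact T := isCompact_meetingTimes hSc hC₁c hC₂c
  have hIcc : T = Icc (sInf T) (sSup T) :=
    eq_Icc_of_connected_compact
      ⟨⟨0, h0⟩, (convex_meetingTimes hSconv hC₁conv hC₂conv).isPreconnected⟩ hTc
  have hsup : sSup T ∈ T := hTc.sSup_mem ⟨0, h0⟩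
  refine hT ▸ ⟨h0, ⟨_, _, hIcc⟩, h1, sSup T,
    lt_of_le_of_ne hsup.1.2 (ne_of_mem_of_not_mem hsup h1), ?_⟩
  rintro t ⟨hlt, hle⟩
  have ht : t ∉ T := fun ht => hlt.not_ge (le_csSup hTc.bddAbove ht)
  rw [disjoint_iff_inter_eq_empty, ← not_nonempty_iff_eq_empty]
  exact fun hmeet => ht ⟨⟨(le_csSup hTc.bddAbove h0).trans hlt.le, hle⟩, hmeet⟩
end
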